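/- For every string S ∈ Σ^n \ H_{n,k} and every cubic position i ∈ P(S), one has |A_{S,i}| ≥ ℓ and |M_{S,i}| < (12γk/n)·|A_{S,i}|. -/

import Mathlib

/-!
Write `m` for the number of mismatches between `S*[i..i+τ-1]` and `μ*[1..τ]`; as `n/(γk) = 3ℓ`,
`τ = τ_{S,i}` is the least `τ ≥ 1` with `τ < 3ℓm`. Such a `τ` exists: otherwise compare `S*[i..]`
with `μ*` over a common period `n·ρ/g`, `g = gcd(n, ρ)`. For `s < ρ/g` the string
`u ↦ μ*[(u mod g) + gs]` has period `g ≤ ρ ≤ ℓ`, and by the Chinese remainder theorem these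
`ρ/g` strings together make exactly the comparisons of the common period, so one of them is
within `n/(3ℓ) = γk` of `S`, and `S` would be pseudo-periodic.

Since `ρ` is a period of `S*[i..i+3ℓ-1]`, the first `3ℓ` positions match; hence `τ > 3ℓ` and
`[i..i+ℓ] ⊆ A`. Minimality of `τ` makes its last position a mismatch and gives `3ℓ(m-1) < τ`;
each mismatch spoils at most `2ℓ` window starts, so `τ ≤ |A| + 2ℓm`. Hence
`ℓm < |A| + 3ℓ ≤ 4|A|`, which is the claim since `12γk/n = 4/ℓ`.
-/

open Finset
open scoped Classical

noncomputable section

variable {α : Type*}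

/-- `i ↻ n`: 1-indexed wrap-around of an (integer) position. -/
def zwrap (n : ℕ) (i : ℤ) : ℕ := ((i - 1) % (n : ℤ)).toNat + 1

/-- `S*[i]`: the infinite cyclic extension of the length-`n` string `S` (1-indexed). -/
def cext (n : ℕ) (S : ℕ → α) (i : ℕ) : α := S ((i - 1) % n + 1)

/-- The fragment `S*[a..]`, i.e. the string `w` with `w[j] = S*[a+j-1]`. -/
def frag (n : ℕ) (S : ℕ → α) (a : ℕ) : ℕ → α := fun j => cext n S (a + j - 1)

/-- Hamming distance restricted to positions `[a..b]` (1-indexed strings). -/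
def hamIcc (a b : ℕ) (S T : ℕ → α) : ℕ := ((Finset.Icc a b).filter fun j => S j ≠ T j).card

/-- Hamming distance between two length-`n` strings. -/
def ham (n : ℕ) (S T : ℕ → α) : ℕ := hamIcc 1 n S T

/-- `p` is a period of the length-`L` string `w` (1-indexed). -/
def IsPeriod (L : ℕ) (w : ℕ → α) (p : ℕ) : Prop :=
  1 ≤ p ∧ ∀ j, 1 ≤ j → j + p ≤ L → w j = w (j + p)

/-- `per(w)`: the shortest period of the length-`L` string `w`. -/
def per (L : ℕ) (w : ℕ → α) : ℕ := sInf {p | IsPeriod L w p}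

/-- `root(S)`: the length of the primitive root of the length-`n` string `S`,
i.e. the least length of a string `Q` with `S = Q^α`. -/
def root (n : ℕ) (S : ℕ → α) : ℕ := sInf {r | r ∣ n ∧ IsPeriod n S r}

/-- `S` is `(a,b)`-pseudo-periodic: it has an `(a,b)`-base. -/
def PseudoPeriodic (n : ℕ) (a b : ℝ) (S : ℕ → α) : Prop :=
  ∃ S' : ℕ → α, (root n S' : ℝ) ≤ (n : ℝ) / a ∧ (ham n S S' : ℝ) ≤ b

/-- `cyc(S)`: left cyclic rotation, `cyc(S)[i] = S*[i+1]`. -/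
def cyc (n : ℕ) (S : ℕ → α) : ℕ → α := fun i => cext n S (i + 1)

/-- `cyc^m(S)` for an integer `m`: `cyc^m(S)[i] = S*[i+m]` (cyclically). -/
def cycZ (n : ℕ) (m : ℤ) (S : ℕ → α) : ℕ → α := fun i => S (zwrap n ((i : ℤ) + m))

/-- `rot_n(P) = {(i-1) ↻ n : i ∈ P}`. -/
def rotSet (n : ℕ) (P : Finset ℕ) : Finset ℕ := P.image fun i => zwrap n ((i : ℤ) - 1)

/-- `ρ_{S,i} = per(S*[i..i+3ℓ-1])`. -/
def rho (n ℓ : ℕ) (S : ℕ → α) (i : ℕ) : ℕ := per (3 * ℓ) (frag n S i)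

/-- `μ_{S,i}*`: the infinite periodic extension of `μ_{S,i} = S*[i..i+ρ_{S,i}-1]` (1-indexed). -/
def muExt (n ℓ : ℕ) (S : ℕ → α) (i : ℕ) : ℕ → α :=
  fun j => cext n S (i + (j - 1) % rho n ℓ S i)

/-- `P(S)`: the set of cubic positions of `S`. -/
def cubicSet (n ℓ : ℕ) (S : ℕ → α) : Finset ℕ :=
  (Finset.Icc 1 n).filter fun i => rho n ℓ S i ≤ ℓ

/-- The defining set of `τ_{S,i}`:
`{τ ≥ 1 : τ < (n/(γk))·Ham(S*[i..i+τ-1], μ_{S,i}*[1..τ])}`. -/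
def tauSet (n ℓ k : ℕ) (γ : ℝ) (S : ℕ → α) (i : ℕ) : Set ℕ :=
  {τ | 1 ≤ τ ∧ (τ : ℝ) < (n : ℝ) / (γ * k) * (hamIcc 1 τ (frag n S i) (muExt n ℓ S i) : ℝ)}

/-- `τ_{S,i}`. -/
def tau (n ℓ k : ℕ) (γ : ℝ) (S : ℕ → α) (i : ℕ) : ℕ := sInf (tauSet n ℓ k γ S i)

/-- `R_{S,i} = [i..i+τ_{S,i}-1]`. -/
def Rset (n ℓ k : ℕ) (γ : ℝ) (S : ℕ → α) (i : ℕ) : Finset ℕ :=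
  Finset.Icc i (i + tau n ℓ k γ S i - 1)

/-- `M_{S,i} = {j ∈ R_{S,i} : S*[j] ≠ μ_{S,i}*[j-i+1]}`. -/
def Mset (n ℓ k : ℕ) (γ : ℝ) (S : ℕ → α) (i : ℕ) : Finset ℕ :=
  (Rset n ℓ k γ S i).filter fun j => cext n S j ≠ muExt n ℓ S i (j - i + 1)

/-- `A_{S,i} = {j ∈ R_{S,i} : [j..j+2ℓ-1] ⊆ R_{S,i} \ M_{S,i}}`. -/
def Aset (n ℓ k : ℕ) (γ : ℝ) (S : ℕ → α) (i : ℕ) : Finset ℕ :=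
  (Rset n ℓ k γ S i).filter fun j =>
    Finset.Icc j (j + 2 * ℓ - 1) ⊆ Rset n ℓ k γ S i \ Mset n ℓ k γ S i

/-- `f_c(S) = ∪_{i ∈ P(S)} {j ↻ n : j ∈ M_{S,i}}`. -/
def fc (n ℓ k : ℕ) (γ : ℝ) (S : ℕ → α) : Finset ℕ :=
  (cubicSet n ℓ S).biUnion fun i => (Mset n ℓ k γ S i).image fun j => zwrap n (j : ℤ)

theorem IsPeriod.apply_add_mul {L p : ℕ} {w : ℕ → α} (h : IsPeriod L w p) (r : ℕ) :
    ∀ m, r + p * m + 1 ≤ L → w (r + 1) = w (r + p * m + 1)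
  | 0, _ => rfl
  | m + 1, hm => by
    rw [mul_add, mul_one] at hm ⊢
    rw [h.apply_add_mul r m (by omega), h.2 _ (by omega) (by omega)]
    ring_nf

theorem IsPeriod.apply_eq_apply_mod {L p : ℕ} {w : ℕ → α} (h : IsPeriod L w p) {j : ℕ}
    (hj : 1 ≤ j) (hjL : j ≤ L) : w j = w ((j - 1) % p + 1) := by
  rw [h.apply_add_mul ((j - 1) % p) ((j - 1) / p) (by rw [Nat.mod_add_div]; omega),
    Nat.mod_add_div]
  congr 1
  omega

theorem isPeriod_per {L : ℕ} (hL : 1 ≤ L) (w : ℕ → α) : IsPeriod L w (per L w) :=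
  Nat.sInf_mem (s := {p | IsPeriod L w p}) ⟨L, hL, fun _ _ hj => absurd hj (by omega)⟩

theorem hamIcc_one_eq_sum_range (N : ℕ) (X Y : ℕ → α) :
    hamIcc 1 N X Y = ∑ p ∈ range N, if X (p + 1) ≠ Y (p + 1) then 1 else 0 := by
  rw [hamIcc, card_filter, ← Ico_add_one_right_eq_Icc, sum_Ico_eq_sum_range]
  simp only [add_tsub_cancel_right, add_comm 1]

theorem hamIcc_succ (t : ℕ) (X Y : ℕ → α) :
    hamIcc 1 (t + 1) X Y = hamIcc 1 t X Y + if X (t + 1) ≠ Y (t + 1) then 1 else 0 := by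
  simp only [hamIcc_one_eq_sum_range, sum_range_succ]

theorem hamIcc_eq_zero {t : ℕ} {X Y : ℕ → α} (h : ∀ j, 1 ≤ j → j ≤ t → X j = Y j) :
    hamIcc 1 t X Y = 0 := by
  simp only [hamIcc, card_eq_zero, filter_eq_empty_iff, mem_Icc, not_not]
  exact fun j hj => h j hj.1 hj.2

theorem ne_and_mul_pred_hamIcc_lt_of_minimal {X Y : ℕ → α} {c τ : ℕ} (hτ : τ < c * hamIcc 1 τ X Y)
    (hmin : ∀ t < τ, c * hamIcc 1 t X Y ≤ t) :
    X τ ≠ Y τ ∧ c * (hamIcc 1 τ X Y - 1) < τ := by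
  cases τ with
  | zero => simp [hamIcc] at hτ
  | succ t =>
    have hprev := hmin t (lt_add_one t)
    rw [hamIcc_succ] at hτ ⊢
    by_cases hXY : X (t + 1) ≠ Y (t + 1)
    · simp only [hXY, if_true, ne_eq, not_false_eq_true, add_tsub_cancel_right, true_and]
      omega
    · simp only [hXY, if_false, add_zero] at hτ
      omega

theorem sum_range_mul_eq_sum_sum {M : Type*} [AddCommMonoid M] (f : ℕ → M) (n q : ℕ) :
    ∑ p ∈ range (n * q), f p = ∑ t ∈ range q, ∑ u ∈ range n, f (n * t + u) := by
  induction q with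
  | zero => simp
  | succ q ih => rw [Nat.mul_succ, sum_range_add, ih, sum_range_succ]

theorem sum_range_mod_add_mul_of_coprime {M : Type*} [AddCommMonoid M] {q c : ℕ}
    (hc : Nat.Coprime c q) (b : ℕ) (F : ℕ → M) :
    ∑ t ∈ range q, F ((b + c * t) % q) = ∑ s ∈ range q, F s := by
  have hmaps : Set.MapsTo (fun t => (b + c * t) % q) (range q) (range q) :=
    fun t ht => mem_range.2 (Nat.mod_lt _ (by simp at ht; omega))
  have hinj : Set.InjOn (fun t => (b + c * t) % q) (range q) := by
    intro t ht t' ht' htt'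
    have hmod : t ≡ t' [MOD q] :=
      Nat.ModEq.cancel_left_of_coprime hc.symm (Nat.ModEq.add_left_cancel' b htt')
    rwa [Nat.ModEq, Nat.mod_eq_of_lt (mem_range.1 ht), Nat.mod_eq_of_lt (mem_range.1 ht')] at hmod
  exact sum_nbij _ (fun t ht => hmaps ht) hinj
    (surjOn_of_injOn_of_card_le _ hmaps hinj le_rfl) (fun _ _ => rfl)

theorem Function.Periodic.sum_range_add {M : Type*} [AddCommMonoid M] {h : ℕ → M} {n : ℕ}
    (hh : Function.Periodic h n) (c : ℕ) : ∑ u ∈ range n, h (u + c) = ∑ u ∈ range n, h u := by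
  simpa only [one_mul, add_comm c, hh.map_mod_nat] using
    sum_range_mod_add_mul_of_coprime (Nat.coprime_one_left n) c h

theorem sum_range_mod_add_mul {M : Type*} [AddCommMonoid M] {n g q : ℕ} (hg : 0 < g)
    (hgn : g ∣ n) (hcop : Nat.Coprime (n / g) q) (a : ℕ) (f : ℕ → M) :
    ∑ t ∈ range q, f ((a + n * t) % (g * q)) = ∑ s ∈ range q, f (a % g + g * s) := by
  obtain ⟨n', rfl⟩ := hgn
  rw [Nat.mul_div_cancel_left _ hg] at hcop
  have hsplit : ∀ t, (a + g * n' * t) % (g * q) = a % g + g * ((a / g + n' * t) % q) := by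
    intro t
    rw [Nat.mod_mul, mul_assoc, Nat.add_mul_mod_self_left, Nat.add_mul_div_left _ _ hg]
  simp_rw [hsplit]
  exact sum_range_mod_add_mul_of_coprime hcop _ (fun s => f (a % g + g * s))

/-- Each point of `M` spoils at most `w` window starts, and the one at `b` spoils every start whose
window leaves `[a..b]`. -/
theorem card_Icc_le_card_filter_window_add {a b w : ℕ} {M : Finset ℕ} (hw : 1 ≤ w) (hb : b ∈ M) :
    (Icc a b).card ≤
      ((Icc a b).filter fun j => Icc j (j + w - 1) ⊆ Icc a b \ M).card + w * M.card := by
  set spoiled := M.biUnion fun p => Icc (p + 1 - w) p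
  have hgood : Icc a b \ spoiled ⊆ (Icc a b).filter fun j => Icc j (j + w - 1) ⊆ Icc a b \ M := by
    intro j hj
    obtain ⟨hjab, hjs⟩ := mem_sdiff.1 hj
    have hfree : ∀ p ∈ M, ¬(p + 1 - w ≤ j ∧ j ≤ p) :=
      fun p hp hpj => hjs (mem_biUnion.2 ⟨p, hp, mem_Icc.2 hpj⟩)
    rw [mem_Icc] at hjab
    refine mem_filter.2 ⟨mem_Icc.2 hjab, fun y hy => ?_⟩
    rw [mem_Icc] at hy
    have hyb : y ≤ b := by
      by_contra
      exact hfree b hb ⟨by omega, by omega⟩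
    exact mem_sdiff.2 ⟨mem_Icc.2 ⟨by omega, hyb⟩, fun hyM => hfree y hyM ⟨by omega, by omega⟩⟩
  have hspoiled : spoiled.card ≤ w * M.card := by
    rw [mul_comm]
    exact card_biUnion_le_card_mul _ _ _ fun p _ => by simp only [Nat.card_Icc]; omega
  calc (Icc a b).card ≤ (Icc a b \ spoiled).card + spoiled.card := card_le_card_sdiff_add_card
    _ ≤ _ := add_le_add (card_le_card hgood) hspoiled

/-- The candidates are `u ↦ U (u % g + g * s)`, `s < ρ / g`; summed over `s`, and over the common
period, both sides compare each `W u` once with each `U x`, `x < ρ`, `x ≡ u [MOD g]`. -/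
theorem exists_periodic_mul_sum_ne_le {W U : ℕ → α} {n ρ : ℕ} (hρ : 0 < ρ)
    (hW : Function.Periodic W n) (hU : Function.Periodic U ρ) :
    ∃ V : ℕ → α, Function.Periodic V (n.gcd ρ) ∧
      ρ / n.gcd ρ * ∑ u ∈ range n, (if W u ≠ V u then 1 else 0) ≤
        ∑ p ∈ range (n * (ρ / n.gcd ρ)), if W p ≠ U p then 1 else 0 := by
  set g := n.gcd ρ
  set q := ρ / g
  have hg : 0 < g := Nat.gcd_pos_of_pos_right n hρ
  have hρq : ρ = g * q := (Nat.mul_div_cancel' (Nat.gcd_dvd_right n ρ)).symm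
  have hq : 0 < q := Nat.div_pos (Nat.le_of_dvd hρ (Nat.gcd_dvd_right n ρ)) hg
  set V : ℕ → ℕ → α := fun s u => U (u % g + g * s)
  have hsum : ∑ p ∈ range (n * q), (if W p ≠ U p then 1 else 0) =
      ∑ s ∈ range q, ∑ u ∈ range n, if W u ≠ V s u then 1 else 0 := by
    rw [sum_range_mul_eq_sum_sum, sum_comm, sum_comm (s := range q)]
    refine sum_congr rfl fun u _ => ?_
    have hWu : ∀ t, W (n * t + u) = W u := fun t => by
      simpa [add_comm, mul_comm] using (hW.nat_mul t) u
    have hUu : ∀ t, U (n * t + u) = U ((u + n * t) % (g * q)) := fun t => by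
      rw [← hρq, hU.map_mod_nat, add_comm]
    simp_rw [hWu, hUu]
    exact sum_range_mod_add_mul hg (Nat.gcd_dvd_left n ρ) (Nat.coprime_div_gcd_div_gcd hg) u
      (fun x => if W u ≠ U x then 1 else 0)
  obtain ⟨s, -, hs⟩ := exists_min_image (range q)
    (fun s => ∑ u ∈ range n, if W u ≠ V s u then 1 else 0) ⟨0, mem_range.2 hq⟩
  refine ⟨V s, fun u => by show U _ = U _; rw [Nat.add_mod_right], ?_⟩
  rw [hsum]
  simpa using card_nsmul_le_sum (range q) _ _ hs

theorem cext_succ (n : ℕ) (S : ℕ → α) (x : ℕ) : cext n S (x + 1) = S (x % n + 1) := by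
  simp [cext]

theorem cext_of_le {n j : ℕ} (S : ℕ → α) (hj : 1 ≤ j) (hjn : j ≤ n) : cext n S j = S j := by
  obtain ⟨x, rfl⟩ := Nat.exists_eq_add_of_le' hj
  rw [cext_succ, Nat.mod_eq_of_lt (by omega)]

theorem frag_succ (n : ℕ) (S : ℕ → α) {i : ℕ} (hi : 1 ≤ i) (p : ℕ) :
    frag n S i (p + 1) = S ((i - 1 + p) % n + 1) := by
  rw [frag, show i + (p + 1) - 1 = i - 1 + p + 1 by omega, cext_succ]

section CubicRun

variable {n ℓ k : ℕ} {γ : ℝ} {S : ℕ → α} {i : ℕ}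

theorem one_le_rho (hℓ : 1 ≤ ℓ) : 1 ≤ rho n ℓ S i :=
  (isPeriod_per (by omega) _).1

theorem frag_eq_muExt {t : ℕ} (ht : 1 ≤ t) (htℓ : t ≤ 3 * ℓ) :
    frag n S i t = muExt n ℓ S i t := by
  rw [(isPeriod_per (by omega) (frag n S i)).apply_eq_apply_mod ht htℓ]
  simp only [frag, muExt, rho, ← add_assoc, Nat.add_sub_cancel]

theorem periodic_frag_succ (hi : 1 ≤ i) : Function.Periodic (fun p => frag n S i (p + 1)) n :=
  fun p => by simp only [frag_succ n S hi, ← add_assoc, Nat.add_mod_right]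

theorem periodic_muExt_succ :
    Function.Periodic (fun p => muExt n ℓ S i (p + 1)) (rho n ℓ S i) :=
  fun p => by simp only [muExt, add_tsub_cancel_right, Nat.add_mod_right]

theorem ham_rotate {V : ℕ → α} {g : ℕ} (hV : Function.Periodic V g) (hgn : g ∣ n)
    (hi : 1 ≤ i) (hin : i ≤ n) :
    ham n S (fun j => V (j + n - i)) =
      ∑ u ∈ range n, if frag n S i (u + 1) ≠ V u then 1 else 0 := by
  have hVn : Function.Periodic V n := by
    obtain ⟨c, rfl⟩ := hgn
    simpa [mul_comm] using hV.nat_mul c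
  set h : ℕ → ℕ := fun x => if cext n S (x + 1) ≠ V (x + 1 + n - i) then 1 else 0 with h_def
  have hh : Function.Periodic h n := fun x => by
    simp only [h_def, cext_succ, Nat.add_mod_right,
      show x + n + 1 + n - i = x + 1 + n - i + n by omega, hVn (x + 1 + n - i)]
  calc ham n S (fun j => V (j + n - i)) = ∑ u ∈ range n, h u := by
        rw [ham, hamIcc_one_eq_sum_range]
        refine sum_congr rfl fun u hu => ?_
        simp only [h_def, cext_of_le S (by omega) (mem_range.1 hu)]
    _ = ∑ u ∈ range n, h (u + (i - 1)) := (hh.sum_range_add _).symm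
    _ = _ := sum_congr rfl fun u _ => by
        simp only [h_def, frag, show i + (u + 1) - 1 = u + (i - 1) + 1 by omega,
          show u + (i - 1) + 1 + n - i = u + n by omega, hVn u]

theorem exists_root_le_of_forall_hamIcc_le (hℓ : 1 ≤ ℓ) (hi : 1 ≤ i) (hin : i ≤ n)
    (hρ : rho n ℓ S i ≤ ℓ) (h : ∀ t, 3 * ℓ * hamIcc 1 t (frag n S i) (muExt n ℓ S i) ≤ t) :
    ∃ S' : ℕ → α, root n S' ≤ ℓ ∧ 3 * ℓ * ham n S S' ≤ n := by
  have hρ0 : 0 < rho n ℓ S i := one_le_rho hℓ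
  have hg : 0 < n.gcd (rho n ℓ S i) := Nat.gcd_pos_of_pos_right n hρ0
  obtain ⟨V, hV, hVle⟩ :=
    exists_periodic_mul_sum_ne_le hρ0 (periodic_frag_succ (n := n) (S := S) hi) periodic_muExt_succ
  have hper : IsPeriod n (fun j => V (j + n - i)) (n.gcd (rho n ℓ S i)) :=
    ⟨hg, fun j _ _ => by
      dsimp only
      rw [show j + n.gcd (rho n ℓ S i) + n - i = j + n - i + n.gcd (rho n ℓ S i) by omega,
        hV (j + n - i)]⟩
  refine ⟨fun j => V (j + n - i), ?_, ?_⟩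
  · calc root n (fun j => V (j + n - i)) ≤ n.gcd (rho n ℓ S i) :=
          Nat.sInf_le ⟨Nat.gcd_dvd_left _ _, hper⟩
      _ ≤ rho n ℓ S i := Nat.le_of_dvd hρ0 (Nat.gcd_dvd_right _ _)
      _ ≤ ℓ := hρ
  · rw [ham_rotate hV (Nat.gcd_dvd_left _ _) hi hin]
    have hH := h (n * (rho n ℓ S i / n.gcd (rho n ℓ S i)))
    rw [hamIcc_one_eq_sum_range] at hH
    have hq : 0 < rho n ℓ S i / n.gcd (rho n ℓ S i) :=
      Nat.div_pos (Nat.le_of_dvd hρ0 (Nat.gcd_dvd_right _ _)) hg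
    refine Nat.le_of_mul_le_mul_left ?_ hq
    nlinarith

theorem cext_eq_frag {j : ℕ} (hij : i ≤ j) : cext n S j = frag n S i (j - i + 1) := by
  rw [frag, show i + (j - i + 1) - 1 = j by omega]

theorem card_Mset (hi : 1 ≤ i) :
    (Mset n ℓ k γ S i).card =
      hamIcc 1 (tau n ℓ k γ S i) (frag n S i) (muExt n ℓ S i) := by
  have hR : Rset n ℓ k γ S i = (Icc 1 (tau n ℓ k γ S i)).map (addRightEmbedding (i - 1)) := by
    rw [map_add_right_Icc, Rset]
    congr 1 <;> omega
  rw [Mset, hR, filter_map, card_map, hamIcc]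
  congr 1
  refine filter_congr fun t ht => ?_
  rw [mem_Icc] at ht
  simp only [Function.comp, addRightEmbedding_apply, cext_eq_frag (by omega : i ≤ t + (i - 1)),
    show t + (i - 1) - i + 1 = t by omega]

theorem Icc_subset_Aset (hi : 1 ≤ i) (hτ : 3 * ℓ < tau n ℓ k γ S i) :
    Icc i (i + ℓ) ⊆ Aset n ℓ k γ S i := by
  intro j hj
  rw [mem_Icc] at hj
  refine mem_filter.2 ⟨mem_Icc.2 ⟨hj.1, by omega⟩, fun y hy => ?_⟩
  rw [mem_Icc] at hy
  refine mem_sdiff.2 ⟨mem_Icc.2 ⟨by omega, by omega⟩, fun hyM => (mem_filter.1 hyM).2 ?_⟩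
  rw [cext_eq_frag (i := i) (by omega), frag_eq_muExt (ℓ := ℓ) (by omega) (by omega)]

theorem lt_card_Aset_and_mul_card_Mset_lt (hℓ : 1 ≤ ℓ) (hi : 1 ≤ i)
    (hτ : tau n ℓ k γ S i <
      3 * ℓ * hamIcc 1 (tau n ℓ k γ S i) (frag n S i) (muExt n ℓ S i))
    (hmin : ∀ t < tau n ℓ k γ S i, 3 * ℓ * hamIcc 1 t (frag n S i) (muExt n ℓ S i) ≤ t) :
    ℓ < (Aset n ℓ k γ S i).card ∧ ℓ * (Mset n ℓ k γ S i).card < 4 * (Aset n ℓ k γ S i).card := by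
  set τ := tau n ℓ k γ S i
  have h3ℓ : 3 * ℓ < τ := by
    by_contra! hle
    rw [hamIcc_eq_zero fun t ht htτ => frag_eq_muExt ht (hle.trans' htτ)] at hτ
    omega
  obtain ⟨hlast, hprev⟩ := ne_and_mul_pred_hamIcc_lt_of_minimal hτ hmin
  have hlastM : i + τ - 1 ∈ Mset n ℓ k γ S i := by
    refine mem_filter.2 ⟨mem_Icc.2 ⟨by omega, le_rfl⟩, ?_⟩
    rwa [cext_eq_frag (i := i) (by omega), show i + τ - 1 - i + 1 = τ by omega]
  have hM : (Mset n ℓ k γ S i).card = hamIcc 1 τ (frag n S i) (muExt n ℓ S i) := card_Mset hi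
  have hA : i + ℓ + 1 - i ≤ (Aset n ℓ k γ S i).card := by
    simpa only [Nat.card_Icc] using card_le_card (Icc_subset_Aset hi h3ℓ)
  have hτA := card_Icc_le_card_filter_window_add (a := i) (w := 2 * ℓ) (by omega) hlastM
  change _ ≤ (Aset n ℓ k γ S i).card + _ at hτA
  rw [Nat.card_Icc, hM] at hτA
  rw [hM]
  generalize hamIcc 1 τ (frag n S i) (muExt n ℓ S i) = m at hprev hτA ⊢
  rw [Nat.mul_sub, mul_one, mul_assoc] at hprev
  rw [mul_assoc] at hτA
  omega

theorem mem_tauSet_iff (hγk : 0 < γ * k) (hn : (n : ℝ) = 3 * γ * k * ℓ) {τ : ℕ} :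
    τ ∈ tauSet n ℓ k γ S i ↔
      1 ≤ τ ∧ τ < 3 * ℓ * hamIcc 1 τ (frag n S i) (muExt n ℓ S i) := by
  have hratio : (n : ℝ) / (γ * k) = 3 * ℓ := by
    rw [hn, div_eq_iff hγk.ne']
    ring
  simp only [tauSet, Set.mem_ofPred_eq, hratio]
  norm_cast

theorem le_of_notMem_tauSet (hγk : 0 < γ * k) (hn : (n : ℝ) = 3 * γ * k * ℓ) {t : ℕ}
    (ht : t ∉ tauSet n ℓ k γ S i) : 3 * ℓ * hamIcc 1 t (frag n S i) (muExt n ℓ S i) ≤ t := by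
  rcases Nat.eq_zero_or_pos t with rfl | ht0
  · simp [hamIcc]
  · rw [mem_tauSet_iff hγk hn, not_and, not_lt] at ht
    exact ht ht0

theorem pseudoPeriodic_of_root_le (hγk : 0 < γ * k) (hℓ : 1 ≤ ℓ)
    (hn : (n : ℝ) = 3 * γ * k * ℓ) {S' : ℕ → α} (hroot : root n S' ≤ ℓ)
    (hham : 3 * ℓ * ham n S S' ≤ n) : PseudoPeriodic n (3 * γ * k) (γ * k) S := by
  have hℓ' : (0 : ℝ) < ℓ := by exact_mod_cast hℓ
  refine ⟨S', ?_, ?_⟩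
  · rw [hn, mul_div_cancel_left₀ _ (by linarith : (0 : ℝ) < 3 * γ * k).ne']
    exact_mod_cast hroot
  · have h : (3 * ℓ * ham n S S' : ℝ) ≤ n := by exact_mod_cast hham
    rw [hn] at h
    nlinarith

theorem tauSet_nonempty (hγk : 0 < γ * k) (hℓ : 1 ≤ ℓ) (hn : (n : ℝ) = 3 * γ * k * ℓ)
    (hS : ¬ PseudoPeriodic n (3 * γ * k) (γ * k) S) (hi : 1 ≤ i) (hin : i ≤ n)
    (hρ : rho n ℓ S i ≤ ℓ) : (tauSet n ℓ k γ S i).Nonempty := by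
  by_contra hempty
  rw [Set.not_nonempty_iff_eq_empty] at hempty
  obtain ⟨S', hroot, hham⟩ := exists_root_le_of_forall_hamIcc_le hℓ hi hin hρ
    fun t => le_of_notMem_tauSet hγk hn (hempty ▸ Set.notMem_empty t)
  exact hS (pseudoPeriodic_of_root_le hγk hℓ hn hroot hham)

end CubicRun

theorem pos_of_natCast_eq_mul {n k ℓ : ℕ} {γ : ℝ} (hn0 : 0 < n) (hn : (n : ℝ) = 3 * γ * k * ℓ) :
    0 < γ * k ∧ 1 ≤ ℓ := by
  have hprod : 0 < γ * k * ℓ := by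
    have : (0 : ℝ) < n := by exact_mod_cast hn0
    linarith
  refine ⟨pos_of_mul_pos_left hprod (Nat.cast_nonneg ℓ), Nat.one_le_iff_ne_zero.2 fun hℓ => ?_⟩
  simp [hℓ] at hprod

theorem stmt8_general {α : Type*} (n k ℓ : ℕ) (γ : ℝ)
    (hn : (n : ℝ) = 3 * γ * k * ℓ)
    (S : ℕ → α) (hS : ¬ PseudoPeriodic n (3 * γ * k) (γ * k) S)
    (i : ℕ) (hi : i ∈ cubicSet n ℓ S) :
    ℓ ≤ (Aset n ℓ k γ S i).card ∧
      ((Mset n ℓ k γ S i).card : ℝ) < 12 * γ * k / n * ((Aset n ℓ k γ S i).card : ℝ) := by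
  obtain ⟨⟨hi1, hin⟩, hρ⟩ : (1 ≤ i ∧ i ≤ n) ∧ rho n ℓ S i ≤ ℓ := by
    simpa only [cubicSet, mem_filter, mem_Icc] using hi
  obtain ⟨hγk, hℓ⟩ := pos_of_natCast_eq_mul (by omega) hn
  have hne := tauSet_nonempty hγk hℓ hn hS hi1 hin hρ
  obtain ⟨-, hτ⟩ := (mem_tauSet_iff hγk hn).1 (Nat.sInf_mem hne)
  obtain ⟨hA, hMA⟩ := lt_card_Aset_and_mul_card_Mset_lt hℓ hi1 hτ
    fun t ht => le_of_notMem_tauSet hγk hn (Nat.notMem_of_lt_sInf ht)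
  refine ⟨hA.le, ?_⟩
  have hℓ' : (0 : ℝ) < ℓ := by exact_mod_cast hℓ
  have hratio : 12 * γ * k / n = 4 / ℓ := by
    rw [hn, div_eq_div_iff (mul_pos (by linarith) hℓ').ne' hℓ'.ne']
    ring
  rw [hratio, div_mul_eq_mul_div, lt_div_iff₀ hℓ', mul_comm]
  exact_mod_cast hMA

/-- For `S ∈ Σ^n \ H_{n,k}` and `i ∈ P(S)`:
`|A_{S,i}| ≥ ℓ` and `|M_{S,i}| < (12γk/n)·|A_{S,i}|`. -/
theorem stmt8 {α : Type*} (n k ℓ : ℕ) (γ : ℝ)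
    (hk1 : 1 ≤ k) (hkn : k ≤ n) (hγ : 14 ≤ γ) (hℓ1 : 1 ≤ ℓ)
    (hn : (n : ℝ) = 3 * γ * k * ℓ)
    (S : ℕ → α) (hS : ¬ PseudoPeriodic n (3 * γ * k) (γ * k) S)
    (i : ℕ) (hi : i ∈ cubicSet n ℓ S) :
    ℓ ≤ (Aset n ℓ k γ S i).card ∧
      ((Mset n ℓ k γ S i).card : ℝ) < 12 * γ * k / n * ((Aset n ℓ k γ S i).card : ℝ) :=
  stmt8_general n k ℓ γ hn S hS i hi
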